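/- arXiv:1801.08499 — 3 statements merged into one kernel-verified Lean document; each statement's English description precedes it below -/
import Mathlib

section
/- Let $f:[-1,1]^d \to \mathbb{R}$ be of the form $f = \mu + \sum_{p \in S_1} \phi_p(x_p) + \sum_{\mathbf{j} = (j_1,j_2) \in S_2} \phi_{\mathbf{j}}(x_{j_1},x_{j_2}) + \sum_{l \in S_2^{(1)}} \phi_l(x_l)$, where each bivariate component satisfies $\phi_{\mathbf{j}}(x_{j_1},x_{j_2}) = 0$ whenever $x_{j_1}=0$ or $x_{j_2}=0$. Fix a map $h:[d]\to\{1,2\}$ with induced partition $\mathcal{A}_1, \mathcal{A}_2$, a vector $\boldsymbol{\beta} \in \{-1,1\}^d$, and $\mathbf{x} \in [-1,1]^d$. Define four points $\mathbf{x}_1,\mathbf{x}_2,\mathbf{x}_3,\mathbf{x}_4$ where the $i$-th coordinate of each point equals $x_i$ or $0$ depending on the indicator of $\beta_i$ or $-\beta_i$ as in the bivariate sampling construction. Then $f(\mathbf{x}_1) - f(\mathbf{x}_2) - f(\mathbf{x}_3) + f(\mathbf{x}_4) = \sum_{\mathbf{j} \in \mathcal{A} \cap S_2} \beta_{j_1}\beta_{j_2}\,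 \phi_{\mathbf{j}}(x_{j_1},x_{j_2})$, where $\mathcal{A}$ is the set of pairs $\mathbf{j}$ with $j_1, j_2$ in different blocks of the partition. -/
/-!
The alternating sum `F x₁ - F x₂ - F x₃ + F x₄` is linear in `F`, and `x₂`, `x₃` are obtained
from `x₁` and `x₄` by exchanging their coordinates on the block `𝒜₁`. Hence every term of `f`
depending on a single coordinate, or on two coordinates of the same block, cancels. For a pair
`(j₁, j₂)` separated by the partition the four points realise all four combinations of the two
coordinates, each of which is `x_i` or `0`; since `φ_𝐣` vanishes on the axes, only the
combination with both coordinates equal to `x` survives, with sign `β_{j₁} β_{j₂}`.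
-/

open Finset

section Piecewise

variable {ι : Type*} (s : Set ι) [∀ i, Decidable (i ∈ s)] (u v : ι → ℝ)

theorem Set.piecewise_alternating_sum_comp_eval (g : ℝ → ℝ) (i : ι) :
    g (u i) - g (s.piecewise v u i) - g (s.piecewise u v i) + g (v i) = 0 := by
  by_cases hi : i ∈ s <;> simp only [Set.piecewise, hi, if_true, if_false] <;> ring

theorem Set.piecewise_alternating_sum_comp_eval₂_of_iff (g : ℝ → ℝ → ℝ) {i k : ι}
    (hik : i ∈ s ↔ k ∈ s) :
    g (u i) (u k) - g (s.piecewise v u i) (s.piecewise v u k)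
      - g (s.piecewise u v i) (s.piecewise u v k) + g (v i) (v k) = 0 := by
  by_cases hi : i ∈ s
  · simp only [Set.piecewise, hi, hik.mp hi, if_true]; ring
  · simp only [Set.piecewise, hi, mt hik.mpr hi, if_false]; ring

theorem Set.piecewise_alternating_sum_comp_eval₂_of_not_iff (g : ℝ → ℝ → ℝ) {i k : ι}
    (hik : ¬(i ∈ s ↔ k ∈ s)) :
    g (u i) (u k) - g (s.piecewise v u i) (s.piecewise v u k)
      - g (s.piecewise u v i) (s.piecewise u v k) + g (v i) (v k)
      = g (u i) (u k) - g (v i) (u k) - g (u i) (v k) + g (v i) (v k) := by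
  by_cases hi : i ∈ s
  · have hk : k ∉ s := fun hk => hik (iff_of_true hi hk)
    simp only [Set.piecewise, hi, hk, if_true, if_false]
  · have hk : k ∈ s := by_contra fun hk => hik (iff_of_false hi hk)
    simp only [Set.piecewise, hi, hk, if_true, if_false]; ring

end Piecewise

theorem mixed_difference_of_vanishing_on_axes {g : ℝ → ℝ → ℝ}
    (hg₁ : ∀ t, g 0 t = 0) (hg₂ : ∀ s, g s 0 = 0) {b c : ℝ}
    (hb : b = 1 ∨ b = -1) (hc : c = 1 ∨ c = -1) (s t : ℝ) :
    g (if b = 1 then s else 0) (if c = 1 then t else 0)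
      - g (if -b = 1 then s else 0) (if c = 1 then t else 0)
      - g (if b = 1 then s else 0) (if -c = 1 then t else 0)
      + g (if -b = 1 then s else 0) (if -c = 1 then t else 0) = b * c * g s t := by
  rcases hb with rfl | rfl <;> rcases hc with rfl | rfl <;> norm_num [hg₁, hg₂]

theorem Set.piecewise_alternating_sum_eval₂_of_sign_selected {ι : Type*} (s : Set ι)
    [∀ i, Decidable (i ∈ s)] {β x u v : ι → ℝ} (hβ : ∀ i, β i = 1 ∨ β i = -1)
    (hu : ∀ i, u i = if β i = 1 then x i else 0) (hv : ∀ i, v i = if -β i = 1 then x i else 0)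
    {g : ℝ → ℝ → ℝ} (hg₁ : ∀ t, g 0 t = 0) (hg₂ : ∀ s, g s 0 = 0) (i k : ι) :
    g (u i) (u k) - g (s.piecewise v u i) (s.piecewise v u k)
      - g (s.piecewise u v i) (s.piecewise u v k) + g (v i) (v k)
      = if i ∈ s ↔ k ∈ s then 0 else β i * β k * g (x i) (x k) := by
  split_ifs with hik
  · exact s.piecewise_alternating_sum_comp_eval₂_of_iff u v g hik
  · rw [s.piecewise_alternating_sum_comp_eval₂_of_not_iff u v g hik, hu, hu, hv, hv]
    exact mixed_difference_of_vanishing_on_axes hg₁ hg₂ (hβ i) (hβ k) _ _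

theorem stmt5_general (d : ℕ) (f : (Fin d → ℝ) → ℝ) (μ : ℝ)
    (S₁ : Finset (Fin d)) (S₂ : Finset (Fin d × Fin d)) (S₂v : Finset (Fin d))
    (φ₁ : Fin d → ℝ → ℝ) (φ₂ : Fin d × Fin d → ℝ → ℝ → ℝ) (ψ : Fin d → ℝ → ℝ)
    (hf : ∀ y : Fin d → ℝ,
      f y = μ + ∑ p ∈ S₁, φ₁ p (y p) + ∑ j ∈ S₂, φ₂ j (y j.1) (y j.2)
              + ∑ l ∈ S₂v, ψ l (y l))
    (hanchor : ∀ j ∈ S₂, (∀ t : ℝ, φ₂ j 0 t = 0) ∧ (∀ s : ℝ, φ₂ j s 0 = 0))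
    (h : Fin d → Fin 2) (β : Fin d → ℝ) (hβ : ∀ i, β i = 1 ∨ β i = -1)
    (x : Fin d → ℝ)
    -- the four query points
    (x₁ x₂ x₃ x₄ : Fin d → ℝ)
    (hx₁ : ∀ i, x₁ i = if β i = 1 then x i else 0)
    (hx₂ : ∀ i, x₂ i = if h i = 0 then (if -β i = 1 then x i else 0)
                        else (if β i = 1 then x i else 0))
    (hx₃ : ∀ i, x₃ i = if h i = 0 then (if β i = 1 then x i else 0)
                        else (if -β i = 1 then x i else 0))
    (hx₄ : ∀ i, x₄ i = if -β i = 1 then x i else 0) :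
    f x₁ - f x₂ - f x₃ + f x₄
      = ∑ j ∈ S₂.filter (fun j => h j.1 ≠ h j.2),
          β j.1 * β j.2 * φ₂ j (x j.1) (x j.2) := by
  set A₁ : Set (Fin d) := {i | h i = 0}
  obtain rfl : x₂ = A₁.piecewise x₄ x₁ :=
    funext fun i => by simp [Set.piecewise, A₁, hx₁, hx₂, hx₄]
  obtain rfl : x₃ = A₁.piecewise x₁ x₄ :=
    funext fun i => by simp [Set.piecewise, A₁, hx₁, hx₃, hx₄]
  have same_block_iff (j : Fin d × Fin d) : (j.1 ∈ A₁ ↔ j.2 ∈ A₁) ↔ h j.1 = h j.2 := by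
    simp only [A₁, Set.mem_ofPred_eq]; omega
  calc _ = ∑ p ∈ S₁, (φ₁ p (x₁ p) - φ₁ p (A₁.piecewise x₄ x₁ p)
              - φ₁ p (A₁.piecewise x₁ x₄ p) + φ₁ p (x₄ p))
        + ∑ j ∈ S₂, (φ₂ j (x₁ j.1) (x₁ j.2)
              - φ₂ j (A₁.piecewise x₄ x₁ j.1) (A₁.piecewise x₄ x₁ j.2)
              - φ₂ j (A₁.piecewise x₁ x₄ j.1) (A₁.piecewise x₁ x₄ j.2) + φ₂ j (x₄ j.1) (x₄ j.2))
        + ∑ l ∈ S₂v, (ψ l (x₁ l) - ψ l (A₁.piecewise x₄ x₁ l)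
              - ψ l (A₁.piecewise x₁ x₄ l) + ψ l (x₄ l)) := by
        simp only [hf, sum_add_distrib, sum_sub_distrib]; ring
    _ = ∑ j ∈ S₂, if h j.1 = h j.2 then 0 else β j.1 * β j.2 * φ₂ j (x j.1) (x j.2) := by
        rw [sum_congr rfl fun j hj => A₁.piecewise_alternating_sum_eval₂_of_sign_selected hβ hx₁
          hx₄ (hanchor j hj).1 (hanchor j hj).2 j.1 j.2]
        simp only [A₁.piecewise_alternating_sum_comp_eval, sum_const_zero, same_block_iff,
          zero_add, add_zero]
    _ = _ := by simp only [sum_filter, ite_not]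

/-- Bivariate sampling lemma (Lemma 4.2): with
`f = μ + ∑_{p∈S₁} φ_p(x_p) + ∑_{j∈S₂} φ_j(x_{j₁},x_{j₂}) + ∑_{l∈S₂⁽¹⁾} ψ_l(x_l)`,
where the bivariate components vanish whenever one argument is zero, the alternating
sum of `f` over the four query points built from a partition `h : [d] → {1,2}` and a
sign vector `β` equals `∑_{j∈𝒜∩S₂} β_{j₁} β_{j₂} φ_j(x_{j₁},x_{j₂})`, where `𝒜` is
the set of pairs separated by the partition. -/
theorem stmt5 (d : ℕ) (f : (Fin d → ℝ) → ℝ) (μ : ℝ)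
    (S₁ : Finset (Fin d)) (S₂ : Finset (Fin d × Fin d)) (S₂v : Finset (Fin d))
    (φ₁ : Fin d → ℝ → ℝ) (φ₂ : Fin d × Fin d → ℝ → ℝ → ℝ) (ψ : Fin d → ℝ → ℝ)
    (hS₂v : S₂v = S₂.image Prod.fst ∪ S₂.image Prod.snd)
    (hf : ∀ y : Fin d → ℝ,
      f y = μ + ∑ p ∈ S₁, φ₁ p (y p) + ∑ j ∈ S₂, φ₂ j (y j.1) (y j.2)
              + ∑ l ∈ S₂v, ψ l (y l))
    (hanchor : ∀ j ∈ S₂, (∀ t : ℝ, φ₂ j 0 t = 0) ∧ (∀ s : ℝ, φ₂ j s 0 = 0))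
    (h : Fin d → Fin 2) (β : Fin d → ℝ) (hβ : ∀ i, β i = 1 ∨ β i = -1)
    (x : Fin d → ℝ)
    -- the four query points
    (x₁ x₂ x₃ x₄ : Fin d → ℝ)
    (hx₁ : ∀ i, x₁ i = if β i = 1 then x i else 0)
    (hx₂ : ∀ i, x₂ i = if h i = 0 then (if -β i = 1 then x i else 0)
                        else (if β i = 1 then x i else 0))
    (hx₃ : ∀ i, x₃ i = if h i = 0 then (if β i = 1 then x i else 0)
                        else (if -β i = 1 then x i else 0))
    (hx₄ : ∀ i, x₄ i = if -β i = 1 then x i else 0) :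
    f x₁ - f x₂ - f x₃ + f x₄
      = ∑ j ∈ S₂.filter (fun j => h j.1 ≠ h j.2),
          β j.1 * β j.2 * φ₂ j (x j.1) (x j.2) :=
  stmt5_general d f μ S₁ S₂ S₂v φ₁ φ₂ ψ hf hanchor h β hβ x x₁ x₂ x₃ x₄ hx₁ hx₂ hx₃ hx₄
end

section
/- Let $f:[-1,1]^d \to \mathbb{R}$ have the anchored additive form $f(\mathbf{x}) = \mu + \sum_{r=1}^{r_0} \sum_{\mathbf{j}} \phi_{\mathbf{j}}(\mathbf{x}_{\mathbf{j}})$ where every component of order $l \leq r_0$ vanishes whenever any of its arguments is $0$. Fix $h:[d] \to [r_0]$, $\boldsymbol{\beta} \in \{-1,1\}^d$, $\mathbf{x} \in [-1,1]^d$, and define for each $z \in [2^{r_0}]$ the point $\mathbf{x}_z$ with $(\mathbf{x}_z)_i = x_i$ if $\beta_i = (-1)^{\mathrm{digit}(z-1,h(i)-1)}$ and $0$ otherwise. Then $\sum_{z=1}^{2^{r_0}} (-1)^{s(z-1)} f(\mathbf{x}_z) = \sum_{\mathbf{j} \in \mathcal{A} \cap S_{r_0}} \beta_{j_1}\cdots\beta_{j_{r_0}}\,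 \phi_{\mathbf{j}}(\mathbf{x}_{\mathbf{j}})$, where $\mathcal{A}$ is the set of $r_0$-tuples on which $h$ is injective. -/
/-!
Index `z ∈ [2^{r₀}]` by its binary digit vector `v : Fin r₀ → Fin 2`: the sign becomes
`(-1)^{∑_b v_b}` and the query point depends on `z` only through `v ∘ h`. Flipping one digit `b`
reverses the sign without changing any term that ignores `b`, so the constant `μ` and every
component `U` whose image under `h` misses some `b` cancel. If `h` maps `U` bijectively onto
`[r₀]`, every digit vector except the one matching `β` on `U` zeroes a variable of `U`, and that
one carries the sign `∏_{i ∈ U} β_i`.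
-/

open Finset

theorem Nat.sum_digits_eq_sum_range_div_pow_mod {b : ℕ} (hb : 2 ≤ b) :
    ∀ {k n : ℕ}, n < b ^ k → (Nat.digits b n).sum = ∑ i ∈ range k, n / b ^ i % b
  | 0, n, hn => by simp_all
  | k + 1, n, hn => by
    rcases n.eq_zero_or_pos with rfl | hn0
    · simp
    have hdiv : n / b < b ^ k := Nat.div_lt_of_lt_mul (by rwa [← pow_succ'])
    rw [Nat.digits_def' hb hn0, List.sum_cons, sum_range_succ',
      Nat.sum_digits_eq_sum_range_div_pow_mod hb hdiv]
    simp [Nat.div_div_eq_div_mul, pow_succ', add_comm]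

theorem sum_digits_finFunctionFinEquiv {m n : ℕ} (hm : 2 ≤ m) (v : Fin n → Fin m) :
    (Nat.digits m (finFunctionFinEquiv v)).sum = ∑ i, (v i : ℕ) := by
  rw [Nat.sum_digits_eq_sum_range_div_pow_mod hm (finFunctionFinEquiv v).isLt,
    sum_range fun i => (finFunctionFinEquiv v : ℕ) / m ^ i % m]
  simp only [← finFunctionFinEquiv_symm_apply_val, Equiv.symm_apply_apply]

theorem toNat_testBit_finFunctionFinEquiv {n : ℕ} (v : Fin n → Fin 2) (i : Fin n) :
    ((finFunctionFinEquiv v : ℕ).testBit i).toNat = v i := by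
  rw [Nat.toNat_testBit, ← finFunctionFinEquiv_symm_apply_val, Equiv.symm_apply_apply]

theorem neg_one_pow_fin_two_injective :
    Function.Injective fun t : Fin 2 => (-1 : ℝ) ^ (t : ℕ) := by
  intro s t hst
  fin_cases s <;> fin_cases t <;> first | rfl | norm_num at hst

/-- The sign `(-1)^{s(z)}` of the paper, read off the binary digit vector `v` of `z`. -/
def bitSign {κ : Type*} [Fintype κ] (R : Type*) [CommRing R] (v : κ → Fin 2) : R :=
  (-1) ^ ∑ c, (v c : ℕ)

section bitSign

variable {κ R : Type*} [Fintype κ] [DecidableEq κ] [CommRing R]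

theorem bitSign_update_one_sub (v : κ → Fin 2) (b : κ) :
    bitSign R (Function.update v b (1 - v b)) = -bitSign R v := by
  have hflip : ∀ t : Fin 2, (-1 : R) ^ ((1 - t : Fin 2) : ℕ) = -(-1) ^ (t : ℕ) := by
    intro t; fin_cases t <;> simp
  rw [bitSign, bitSign, ← sum_erase_add _ _ (mem_univ b), ← sum_erase_add _ _ (mem_univ b),
    sum_congr rfl fun c hc => by rw [Function.update_of_ne (ne_of_mem_erase hc)],
    Function.update_self, pow_add, pow_add, hflip, mul_neg]

theorem sum_bitSign_mul_eq_zero (g : (κ → Fin 2) → R) (b : κ)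
    (hg : ∀ v t, g (Function.update v b t) = g v) :
    ∑ v, bitSign R v * g v = 0 :=
  sum_ninvolution (fun v => Function.update v b (1 - v b))
    (fun v => by rw [bitSign_update_one_sub, hg, neg_mul, add_neg_cancel])
    (fun v _ hv => by
      have hb := congrFun hv b
      simp only [Function.update_self] at hb
      omega)
    (fun _ => mem_univ _)
    (fun v => by simp)

theorem sum_bitSign [Nonempty κ] : ∑ v : κ → Fin 2, bitSign R v = 0 := by
  simpa using sum_bitSign_mul_eq_zero (R := R) 1 (Classical.arbitrary κ) fun _ _ => rfl

end bitSign

/-- The query point `x_z` of the paper, for `z` with binary digit vector `v`. -/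
noncomputable def samplePoint {ι κ : Type*} (h : ι → κ) (β x : ι → ℝ) (v : κ → Fin 2) :
    ι → ℝ :=
  fun i => if β i = (-1) ^ (v (h i) : ℕ) then x i else 0

section component

variable {ι κ : Type*} [Fintype κ] [DecidableEq κ] {U : Finset ι} {φ : (ι → ℝ) → ℝ}
  {h : ι → κ} (β x : ι → ℝ)

theorem sum_bitSign_mul_samplePoint_of_not_mem_image
    (hdep : ∀ y z : ι → ℝ, (∀ i ∈ U, y i = z i) → φ y = φ z) {b : κ} (hb : b ∉ U.image h) :
    ∑ v, bitSign ℝ v * φ (samplePoint h β x v) = 0 :=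
  sum_bitSign_mul_eq_zero _ b fun v t => hdep _ _ fun i hi => by
    simp only [samplePoint, Function.update_of_ne (ne_of_mem_of_not_mem (mem_image_of_mem h hi) hb)]

theorem sum_bitSign_mul_samplePoint_of_injOn
    (hdep : ∀ y z : ι → ℝ, (∀ i ∈ U, y i = z i) → φ y = φ z)
    (hanchor : ∀ y : ι → ℝ, (∃ i ∈ U, y i = 0) → φ y = 0)
    (hβ : ∀ i, β i = 1 ∨ β i = -1) (hinj : Set.InjOn h U) (hcard : #U = Fintype.card κ) :
    ∑ v, bitSign ℝ v * φ (samplePoint h β x v) = (∏ i ∈ U, β i) * φ x := by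
  classical
  have himage : U.image h = univ := eq_univ_of_card _ (by rw [card_image_of_injOn hinj, hcard])
  choose g hgU hgh using fun b => mem_image.mp (himage ▸ mem_univ b)
  have hgh' : ∀ i ∈ U, g (h i) = i := fun i hi => hinj (hgU _) hi (hgh _)
  -- the only digit vector whose query point keeps every coordinate of `U`
  set v₀ : κ → Fin 2 := fun b => if β (g b) = 1 then 0 else 1
  have hv₀ : ∀ i ∈ U, (-1 : ℝ) ^ (v₀ (h i) : ℕ) = β i := by
    intro i hi
    rcases hβ i with hβi | hβi <;> norm_num [v₀, hgh' i hi, hβi]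
  rw [Fintype.sum_eq_single v₀]
  · have hpoint : φ (samplePoint h β x v₀) = φ x :=
      hdep _ _ fun i hi => if_pos (hv₀ i hi).symm
    have hsign : bitSign ℝ v₀ = ∏ i ∈ U, β i := by
      rw [bitSign, ← prod_pow_eq_pow_sum, ← himage, prod_image hinj]
      exact prod_congr rfl hv₀
    rw [hpoint, hsign]
  · intro v hv
    obtain ⟨b, hb⟩ := Function.ne_iff.mp hv
    refine mul_eq_zero_of_right _ (hanchor _ ⟨g b, hgU b, if_neg ?_⟩)
    rw [← hv₀ _ (hgU b), hgh]
    exact fun h => hb (neg_one_pow_fin_two_injective h).symm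

theorem sum_bitSign_mul_samplePoint
    (hdep : ∀ y z : ι → ℝ, (∀ i ∈ U, y i = z i) → φ y = φ z)
    (hanchor : ∀ y : ι → ℝ, (∃ i ∈ U, y i = 0) → φ y = 0)
    (hβ : ∀ i, β i = 1 ∨ β i = -1) (hcard : #U ≤ Fintype.card κ) :
    ∑ v, bitSign ℝ v * φ (samplePoint h β x v) =
      if #U = Fintype.card κ ∧ Set.InjOn h U then (∏ i ∈ U, β i) * φ x else 0 := by
  split_ifs with hU
  · exact sum_bitSign_mul_samplePoint_of_injOn β x hdep hanchor hβ hU.2 hU.1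
  · obtain ⟨b, hb⟩ : ∃ b, b ∉ U.image h := by
      by_contra! himage
      have hle : Fintype.card κ ≤ #(U.image h) := by
        rw [← card_univ]
        exact card_le_card fun b _ => himage b
      have himage_le : #(U.image h) ≤ #U := card_image_le
      exact hU ⟨by omega, injOn_of_card_image_eq (by omega)⟩
    exact sum_bitSign_mul_samplePoint_of_not_mem_image β x hdep hb

end component

/-- Multivariate sampling identity (Lemma 5.3).  Let
`f(x) = μ + ∑_{U ∈ F} φ_U(x_U)` be an anchored additive model whose components
have order at most `r₀`, depend only on their own variables, and vanish whenever
one of their arguments is zero.  For `h : [d] → [r₀]`, `β ∈ {-1,1}^d` and query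
points `(x_z)_i = x_i` if `β_i = (-1)^{digit(z-1, h(i)-1)}` and `0` otherwise,
`∑_{z=1}^{2^{r₀}} (-1)^{s(z-1)} f(x_z)
  = ∑_{U ∈ 𝒜 ∩ S_{r₀}} (∏_{i∈U} β_i) φ_U(x_U)`,
where `𝒜 ∩ S_{r₀}` consists of the components of exact order `r₀` on which `h`
is injective. -/
theorem stmt11 (d r₀ : ℕ) (hr₀ : 1 ≤ r₀)
    (f : (Fin d → ℝ) → ℝ) (μ : ℝ)
    (F : Finset (Finset (Fin d))) (φ : Finset (Fin d) → (Fin d → ℝ) → ℝ)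
    (horder : ∀ U ∈ F, U.card ≤ r₀)
    (hdep : ∀ U ∈ F, ∀ y z : Fin d → ℝ, (∀ i ∈ U, y i = z i) → φ U y = φ U z)
    (hanchor : ∀ U ∈ F, ∀ y : Fin d → ℝ, (∃ i ∈ U, y i = 0) → φ U y = 0)
    (hf : ∀ y : Fin d → ℝ, f y = μ + ∑ U ∈ F, φ U y)
    (h : Fin d → Fin r₀) (β : Fin d → ℝ) (hβ : ∀ i, β i = 1 ∨ β i = -1)
    (x : Fin d → ℝ) :
    ∑ z ∈ Finset.range (2 ^ r₀), (-1 : ℝ) ^ ((Nat.digits 2 z).sum)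
        * f (fun i => if β i = (-1 : ℝ) ^ (Nat.testBit z (h i)).toNat then x i else 0)
      = ∑ U ∈ F.filter
            (fun U : Finset (Fin d) =>
              U.card = r₀ ∧ ∀ a ∈ U, ∀ b ∈ U, h a = h b → a = b),
          (∏ i ∈ U, β i) * φ U x := by
  have : Nonempty (Fin r₀) := ⟨⟨0, hr₀⟩⟩
  calc _ = ∑ v : Fin r₀ → Fin 2, bitSign ℝ v * f (samplePoint h β x v) := by
        rw [sum_range, ← finFunctionFinEquiv.sum_comp]
        simp only [sum_digits_finFunctionFinEquiv le_rfl, toNat_testBit_finFunctionFinEquiv]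
        rfl
    _ = ∑ U ∈ F, ∑ v, bitSign ℝ v * φ U (samplePoint h β x v) := by
        simp only [hf, mul_add, mul_sum, sum_add_distrib, ← sum_mul, sum_bitSign, zero_mul,
          zero_add]
        exact sum_comm
    _ = _ := by
        rw [sum_filter]
        refine sum_congr rfl fun U hU => ?_
        rw [sum_bitSign_mul_samplePoint β x (hdep U hU) (hanchor U hU) hβ
          (by simpa using horder U hU)]
        simp only [Fintype.card_fin, Set.InjOn, mem_coe]
end

section
/- Suppose each active univariate component $\phi_p$ ($p \in S_1$) of a sparse additive model is Hölder continuous with constant $L>0$ and exponent $\alpha \in (0,1]$, and satisfies $|\phi_p(x_p^*)| > D_1$ for some $x_p^* \in [-1,1]$. Let $\widehat{z}: \{-1,-\frac{m-1}{m},\dots,\frac{m-1}{m},1\} \to \mathbb{R}^d$ be estimates satisfying $|\widehat{z}_p(x) - \phi_p(x)| \leq \epsilon$ for all grid points $x$ and all $p$ (with $\phi_q \equiv 0$ for $q \notin S_1$). If $\epsilon < D_1/3$ and $m \geq (3L/D_1)^{1/\alpha}$, then $\{p : \exists x \text{ in the grid with } |\widehat{z}_p(x)| > \epsilon\} = S_1$.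 -/
/-!
Every point of `[-1,1]` lies within `1/m` of the grid `{k/m : |k| ≤ m}`, and the choice of `m`
makes the Hölder oscillation over such a distance at most `D₁/3`. So an active component keeps
modulus above `2D₁/3` at the grid point nearest to where it exceeds `D₁`, and its `ε`-accurate
estimate there exceeds `D₁/3 > ε`; an inactive component vanishes, so its estimates never
exceed `ε`.
-/

open Finset

lemma int_div_mem_Icc {m : ℕ} {k : ℤ} (hk : k ∈ Icc (-(m : ℤ)) m) :
    (k : ℝ) / m ∈ Set.Icc (-1 : ℝ) 1 := by
  rw [Finset.mem_Icc] at hk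
  have hkm : |(k : ℝ)| ≤ m := abs_le.mpr ⟨by exact_mod_cast hk.1, by exact_mod_cast hk.2⟩
  rw [Set.mem_Icc, ← abs_le, abs_div, Nat.abs_cast]
  exact div_le_one_of_le₀ hkm m.cast_nonneg

lemma exists_int_div_near {m : ℕ} (hm : 0 < m) {x : ℝ} (hx : x ∈ Set.Icc (-1 : ℝ) 1) :
    ∃ k ∈ Icc (-(m : ℤ)) m, |x - k / m| ≤ 1 / m := by
  have hm' : (0 : ℝ) < m := by exact_mod_cast hm
  have hmx : -(m : ℝ) ≤ m * x ∧ m * x ≤ m := by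
    constructor <;> nlinarith [hx.1, hx.2]
  refine ⟨⌈(m : ℝ) * x⌉, Finset.mem_Icc.mpr ⟨?_, ?_⟩, ?_⟩
  · rw [Int.le_ceil_iff]
    push_cast
    linarith
  · exact Int.ceil_le.mpr (by exact_mod_cast hmx.2)
  · have hdiff : x - ⌈(m : ℝ) * x⌉ / m = (m * x - ⌈(m : ℝ) * x⌉) / m := by field_simp
    rw [hdiff, abs_div, Nat.abs_cast]
    gcongr
    rw [abs_sub_comm, abs_of_nonneg (sub_nonneg.mpr (Int.le_ceil _))]
    linarith [Int.ceil_lt_add_one ((m : ℝ) * x)]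

lemma mul_one_div_rpow_le {L D α m : ℝ} (hL : 0 < L) (hD : 0 < D) (hα : 0 < α)
    (hm : (3 * L / D) ^ (1 / α) ≤ m) : L * (1 / m) ^ α ≤ D / 3 := by
  have hm0 : 0 < m := (Real.rpow_pos_of_pos (by positivity) _).trans_le hm
  have hmα : 3 * L / D ≤ m ^ α := by
    rwa [one_div, Real.rpow_inv_le_iff_of_pos (by positivity) hm0.le hα] at hm
  rw [div_le_iff₀ hD] at hmα
  rw [one_div, Real.inv_rpow hm0.le, ← div_eq_mul_inv,
    div_le_div_iff₀ (Real.rpow_pos_of_pos hm0 α) three_pos]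
  linarith

lemma exists_grid_lt_abs_of_holder {f g : ℝ → ℝ} {L D ε α : ℝ} {m : ℕ} (hm : 0 < m)
    (hf : ∀ x ∈ Set.Icc (-1 : ℝ) 1, ∀ y ∈ Set.Icc (-1 : ℝ) 1, |f x - f y| ≤ L * |x - y| ^ α)
    (hL : 0 ≤ L) (hα : 0 < α) (hmesh : L * (1 / m) ^ α ≤ D / 3)
    {x : ℝ} (hx : x ∈ Set.Icc (-1 : ℝ) 1) (hfx : D < |f x|)
    (hg : ∀ k ∈ Icc (-(m : ℤ)) m, |g (k / m) - f (k / m)| ≤ ε) (hε : ε < D / 3) :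
    ∃ k ∈ Icc (-(m : ℤ)) m, ε < |g (k / m)| := by
  obtain ⟨k, hk, hxk⟩ := exists_int_div_near hm hx
  have hosc : |f x - f (k / m)| ≤ D / 3 :=
    calc |f x - f (k / m)| ≤ L * |x - k / m| ^ α := hf x hx _ (int_div_mem_Icc hk)
      _ ≤ L * (1 / m) ^ α := by gcongr
      _ ≤ D / 3 := hmesh
  refine ⟨k, hk, ?_⟩
  have hgk := hg k hk
  linarith [abs_sub_abs_le_abs_sub (f x) (f (k / m)),
    abs_sub_abs_le_abs_sub (f (k / m)) (g (k / m)), abs_sub_comm (g (k / m)) (f (k / m))]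

theorem stmt12_general (d : ℕ) (S₁ : Finset (Fin d)) (φ : Fin d → ℝ → ℝ)
    (L D₁ ε α : ℝ) (hL : 0 < L) (hD₁ : 0 < D₁) (hα₁ : 0 < α)
    (m : ℕ) (hm : (3 * L / D₁) ^ (1 / α) ≤ (m : ℝ))
    (zhat : ℝ → Fin d → ℝ)
    (hHolder : ∀ p ∈ S₁, ∀ x ∈ Set.Icc (-1 : ℝ) 1, ∀ y ∈ Set.Icc (-1 : ℝ) 1,
      |φ p x - φ p y| ≤ L * |x - y| ^ α)
    (hident : ∀ p ∈ S₁, ∃ xs ∈ Set.Icc (-1 : ℝ) 1, D₁ < |φ p xs|)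
    (hinactive : ∀ q, q ∉ S₁ → ∀ x : ℝ, φ q x = 0)
    (hacc : ∀ k ∈ Finset.Icc (-(m : ℤ)) (m : ℤ), ∀ p : Fin d,
      |zhat ((k : ℝ) / (m : ℝ)) p - φ p ((k : ℝ) / (m : ℝ))| ≤ ε)
    (hε : ε < D₁ / 3) :
    ∀ p : Fin d,
      (∃ k ∈ Finset.Icc (-(m : ℤ)) (m : ℤ), ε < |zhat ((k : ℝ) / (m : ℝ)) p|) ↔ p ∈ S₁ := by
  have hm0 : 0 < m := by exact_mod_cast (Real.rpow_pos_of_pos (by positivity) _).trans_le hm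
  intro p
  constructor
  · rintro ⟨k, hk, hkε⟩
    by_contra hp
    have hzk := hacc k hk p
    rw [hinactive p hp, sub_zero] at hzk
    linarith
  · intro hp
    obtain ⟨xs, hxs, hφxs⟩ := hident p hp
    exact exists_grid_lt_abs_of_holder (g := (zhat · p)) hm0 (hHolder p hp) hL.le hα₁
      (mul_one_div_rpow_le hL hD₁ hα₁ hm) hxs hφxs (fun k hk => hacc k hk p) hε

/-- Thresholding recovery of the univariate support (Lemma 3.1).  If the active
components `φ_p`, `p ∈ S₁`, are `(L,α)`-Hölder on `[-1,1]` and each exceeds `D₁`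
somewhere, inactive components vanish, the estimates `zhat` are `ε`-accurate on the
uniform grid `{k/m : |k| ≤ m}`, `ε < D₁/3` and `m ≥ (3L/D₁)^{1/α}`, then
thresholding at `ε` recovers `S₁` exactly. -/
theorem stmt12 (d : ℕ) (S₁ : Finset (Fin d)) (φ : Fin d → ℝ → ℝ)
    (L D₁ ε α : ℝ) (hL : 0 < L) (hD₁ : 0 < D₁) (hα₁ : 0 < α) (hα₂ : α ≤ 1)
    (m : ℕ) (hm : (3 * L / D₁) ^ (1 / α) ≤ (m : ℝ))
    (zhat : ℝ → Fin d → ℝ)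
    (hHolder : ∀ p ∈ S₁, ∀ x ∈ Set.Icc (-1 : ℝ) 1, ∀ y ∈ Set.Icc (-1 : ℝ) 1,
      |φ p x - φ p y| ≤ L * |x - y| ^ α)
    (hident : ∀ p ∈ S₁, ∃ xs ∈ Set.Icc (-1 : ℝ) 1, D₁ < |φ p xs|)
    (hinactive : ∀ q, q ∉ S₁ → ∀ x : ℝ, φ q x = 0)
    (hacc : ∀ k ∈ Finset.Icc (-(m : ℤ)) (m : ℤ), ∀ p : Fin d,
      |zhat ((k : ℝ) / (m : ℝ)) p - φ p ((k : ℝ) / (m : ℝ))| ≤ ε)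
    (hε : ε < D₁ / 3) :
    ∀ p : Fin d,
      (∃ k ∈ Finset.Icc (-(m : ℤ)) (m : ℤ), ε < |zhat ((k : ℝ) / (m : ℝ)) p|) ↔ p ∈ S₁ :=
  stmt12_general d S₁ φ L D₁ ε α hL hD₁ hα₁ m hm zhat hHolder hident hinactive hacc hε
end
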